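/- Let m₁ > 0, m₂ = 2m₁, let Q be a quadratic homogeneous polynomial on ℝ²×ℝ^{2×3}, let ω = (ω₀,ω₁,ω₂) ∈ ℝ³ and α₁, α₂ ∈ ℂ. For τ ∈ ℝ define v(τ) = ( Re(α₁ e^{i m₁ τ}), Re(α₂ e^{i m₂ τ}) ) ∈ ℝ² and w(τ) ∈ ℝ^{2×3} with entries w(τ)_{k,a} = −ω_a m_k Im(α_k e^{i m_k τ}) (k = 1,2; a = 0,1,2). Then: (m₁/2π) ∫₀^{2π/m₁} Q( v(τ), w(τ) ) e^{−i m₁ τ} dτ = Φ(ω;1) · conj(α₁) · α₂, and (m₁/2π) ∫₀^{2π/m₁} Q( v(τ), w(τ) ) e^{−i m₂ τ} dτ = Φ(ω;2) · α₁², where Φ(ω;j) = ∫₀¹ Q( V(θ), W(ω,θ) ) e^{−2πijθ} dθ with V(θ) = (cos 2πθ, cos 4πθ) and W(ω,θ)_{k,a} = −ω_a m_k sin(2πkθ). -/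
import Mathlib


open Real

noncomputable section
open Real


/-- The hyperboloid `ℍ = {ω ∈ ℝ³ : ω₀² − ω₁² − ω₂² = 1}`. -/
def Hyp : Set (Fin 3 → ℝ) := {ω | ω 0 ^ 2 - ω 1 ^ 2 - ω 2 ^ 2 = 1}

/-- `V(θ) = (cos 2πθ, cos 4πθ)`. -/
def Vprof (θ : ℝ) (k : Fin 2) : ℝ := Real.cos (2 * π * ((k.1 : ℝ) + 1) * θ)

/-- `W(ω,θ)_{k,a} = −ω_a m_k sin(2πkθ)` with `m_k = k·m₁` (`k = 1,2`). -/
def Wprof (m₁ : ℝ) (ω : Fin 3 → ℝ) (θ : ℝ) (k : Fin 2) (a : Fin 3) : ℝ :=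
  -(ω a) * (((k.1 : ℝ) + 1) * m₁) * Real.sin (2 * π * ((k.1 : ℝ) + 1) * θ)

/-- `Φ_j(ω) = ∫₀¹ Q(V(θ), W(ω,θ)) e^{−2πijθ} dθ`. -/
def Phi (m₁ : ℝ) (Q : (Fin 2 → ℝ) × (Fin 2 → Fin 3 → ℝ) → ℝ) (j : ℕ) (ω : Fin 3 → ℝ) : ℂ :=
  ∫ θ in (0:ℝ)..1,
    (Q (Vprof θ, Wprof m₁ ω θ) : ℂ) * Complex.exp (((-(2 * π * (j : ℝ) * θ) : ℝ) : ℂ) * Complex.I)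

/-- `Q` is a quadratic homogeneous polynomial on `ℝ²×ℝ^{2×3}`. -/
def IsQuad (Q : (Fin 2 → ℝ) × (Fin 2 → Fin 3 → ℝ) → ℝ) : Prop :=
  ∃ B : ((Fin 2 → ℝ) × (Fin 2 → Fin 3 → ℝ)) →ₗ[ℝ] ((Fin 2 → ℝ) × (Fin 2 → Fin 3 → ℝ)) →ₗ[ℝ] ℝ,
    ∀ x, Q x = B x x

/-- `v(τ)_k = Re(α_k e^{i m_k τ})` with `m_k = k·m₁`. -/
def vosc (m₁ : ℝ) (α : Fin 2 → ℂ) (τ : ℝ) (k : Fin 2) : ℝ :=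
  (α k * Complex.exp (Complex.I * ((((k.1 : ℝ) + 1) * m₁ * τ : ℝ) : ℂ))).re

/-- `w(τ)_{k,a} = −ω_a m_k Im(α_k e^{i m_k τ})`. -/
def wosc (m₁ : ℝ) (ω : Fin 3 → ℝ) (α : Fin 2 → ℂ) (τ : ℝ) (k : Fin 2) (a : Fin 3) : ℝ :=
  -(ω a) * (((k.1 : ℝ) + 1) * m₁) *
    (α k * Complex.exp (Complex.I * ((((k.1 : ℝ) + 1) * m₁ * τ : ℝ) : ℂ))).im


lemma expInt (μ : ℝ) (hμ : 0 < μ) (n : ℤ) :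
    ∫ τ in (0:ℝ)..(2*π/μ), Complex.exp (Complex.I * (((n:ℝ) * μ * τ : ℝ) : ℂ))
      = if n = 0 then ((2*π/μ : ℝ) : ℂ) else 0 := by
  rcases eq_or_ne n 0 with h | h
  · simp [h]
  · have hn : ((n:ℝ) : ℂ) ≠ 0 := by exact_mod_cast (Int.cast_ne_zero (α := ℝ)).mpr h
    have hμ' : ((μ:ℝ) : ℂ) ≠ 0 := by exact_mod_cast hμ.ne'
    have hc : (Complex.I * ((n:ℝ) * μ) : ℂ) ≠ 0 :=
      mul_ne_zero Complex.I_ne_zero (mul_ne_zero hn hμ')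
    have heq : ∀ τ : ℝ, Complex.exp (Complex.I * (((n:ℝ) * μ * τ : ℝ) : ℂ))
        = Complex.exp ((Complex.I * ((n:ℝ) * μ)) * τ) := by
      intro τ; congr 1; push_cast; ring
    rw [intervalIntegral.integral_congr (fun τ _ => heq τ),
      integral_exp_mul_complex hc]
    have h2 : (Complex.I * ((n:ℝ) * μ)) * ((2*π/μ : ℝ) : ℂ) = (n : ℂ) * (2 * π * Complex.I) := by
      push_cast
      field_simp
    rw [h2]
    have h3 : ((n:ℂ) * (2 * π * Complex.I)) = ((n:ℤ) : ℂ) * (2 * (π:ℂ) * Complex.I) := by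
      push_cast; ring
    rw [h3, Complex.exp_int_mul_two_pi_mul_I]
    simp [h]

def cI' (s : Bool) : ℂ := if s then -(Complex.I/2) else Complex.I/2
def sg (s : Bool) : ℤ := if s then 1 else -1

lemma conj_mul_exp (z : ℂ) (x : ℝ) :
    (starRingEnd ℂ) (z * Complex.exp (Complex.I * (x:ℂ)))
      = (starRingEnd ℂ) z * Complex.exp (Complex.I * ((-x : ℝ):ℂ)) := by
  rw [map_mul, ← Complex.exp_conj]
  congr 1
  simp [Complex.conj_I]

lemma re_eq (z : ℂ) (x : ℝ) : (((z * Complex.exp (Complex.I * (x:ℂ))).re : ℝ) : ℂ)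
    = (z * Complex.exp (Complex.I * (x:ℂ))
       + (starRingEnd ℂ) z * Complex.exp (Complex.I * ((-x : ℝ):ℂ))) / 2 := by
  have h2 := Complex.add_conj (z * Complex.exp (Complex.I * (x:ℂ)))
  rw [conj_mul_exp] at h2
  rw [h2]
  push_cast; ring

lemma im_eq (z : ℂ) (x : ℝ) : (((z * Complex.exp (Complex.I * (x:ℂ))).im : ℝ) : ℂ)
    = (z * Complex.exp (Complex.I * (x:ℂ))
       - (starRingEnd ℂ) z * Complex.exp (Complex.I * ((-x : ℝ):ℂ))) / (2 * Complex.I) := by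
  have h2 := Complex.sub_conj (z * Complex.exp (Complex.I * (x:ℂ)))
  rw [conj_mul_exp] at h2
  rw [h2]
  have : (Complex.I : ℂ) ≠ 0 := Complex.I_ne_zero
  field_simp
  push_cast
  ring_nf


lemma re_eq' (z : ℂ) (x : ℝ) : (((z * Complex.exp (Complex.I * (x:ℂ))).re : ℝ) : ℂ)
    = (1/2) * (z * Complex.exp (Complex.I * (x:ℂ))
       + (starRingEnd ℂ) z * Complex.exp (Complex.I * ((-x : ℝ):ℂ))) := by
  rw [re_eq]; ring

lemma im_eq' (z : ℂ) (x : ℝ) : (((z * Complex.exp (Complex.I * (x:ℂ))).im : ℝ) : ℂ)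
    = -(Complex.I/2) * (z * Complex.exp (Complex.I * (x:ℂ))
       - (starRingEnd ℂ) z * Complex.exp (Complex.I * ((-x : ℝ):ℂ))) := by
  have h2 := Complex.sub_conj (z * Complex.exp (Complex.I * (x:ℂ)))
  rw [conj_mul_exp] at h2
  rw [h2]
  push_cast
  linear_combination ((z * Complex.exp (Complex.I * (x:ℂ))).im : ℂ) * Complex.I_sq

set_option maxHeartbeats 2000000 in
lemma scalar_expand (A B C D : ℝ) (a b : ℂ) (u v : ℝ) :
    ((((a * Complex.exp (Complex.I * (u:ℂ))).re * (b * Complex.exp (Complex.I * (v:ℂ))).re * A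
      + (a * Complex.exp (Complex.I * (u:ℂ))).re * (b * Complex.exp (Complex.I * (v:ℂ))).im * B
      + (a * Complex.exp (Complex.I * (u:ℂ))).im * (b * Complex.exp (Complex.I * (v:ℂ))).re * C
      + (a * Complex.exp (Complex.I * (u:ℂ))).im * (b * Complex.exp (Complex.I * (v:ℂ))).im * D
      : ℝ) : ℂ))
    = ∑ s : Bool, ∑ t : Bool,
        (if s then a else (starRingEnd ℂ) a) * (if t then b else (starRingEnd ℂ) b)
        * ((1/2)*(1/2)*(A:ℂ) + (1/2)*cI' t*(B:ℂ) + cI' s*(1/2)*(C:ℂ) + cI' s*cI' t*(D:ℂ))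
        * Complex.exp (Complex.I * ((((sg s : ℤ) : ℝ) * u + ((sg t : ℤ) : ℝ) * v : ℝ) : ℂ)) := by
  have hexp : ∀ x y : ℝ, Complex.exp (Complex.I * ((x + y : ℝ) : ℂ))
      = Complex.exp (Complex.I * (x:ℂ)) * Complex.exp (Complex.I * (y:ℂ)) := by
    intro x y
    rw [← Complex.exp_add]; push_cast; ring_nf
  have e1 : Complex.exp (Complex.I * ((((1:ℝ)) * u + ((1:ℝ)) * v : ℝ) : ℂ))
      = Complex.exp (Complex.I * ((u:ℝ):ℂ)) * Complex.exp (Complex.I * ((v:ℝ):ℂ)) := by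
    rw [show ((1:ℝ) * u + (1:ℝ) * v) = u + v by ring, hexp]
  have e2 : Complex.exp (Complex.I * ((((1:ℝ)) * u + ((-1:ℝ)) * v : ℝ) : ℂ))
      = Complex.exp (Complex.I * ((u:ℝ):ℂ)) * Complex.exp (Complex.I * ((-v:ℝ):ℂ)) := by
    rw [show ((1:ℝ) * u + (-1:ℝ) * v) = u + -v by ring, hexp]
  have e3 : Complex.exp (Complex.I * ((((-1:ℝ)) * u + ((1:ℝ)) * v : ℝ) : ℂ))
      = Complex.exp (Complex.I * ((-u:ℝ):ℂ)) * Complex.exp (Complex.I * ((v:ℝ):ℂ)) := by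
    rw [show ((-1:ℝ) * u + (1:ℝ) * v) = -u + v by ring, hexp]
  have e4 : Complex.exp (Complex.I * ((((-1:ℝ)) * u + ((-1:ℝ)) * v : ℝ) : ℂ))
      = Complex.exp (Complex.I * ((-u:ℝ):ℂ)) * Complex.exp (Complex.I * ((-v:ℝ):ℂ)) := by
    rw [show ((-1:ℝ) * u + (-1:ℝ) * v) = -u + -v by ring, hexp]
  simp only [Fintype.sum_bool, cI', sg, Bool.false_eq_true, if_true, if_false, Int.cast_one, Int.cast_neg]
  rw [e1, e2, e3, e4]
  push_cast
  rw [re_eq', re_eq', im_eq', im_eq']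
  push_cast
  ring

def Xv (k : Fin 2) : (Fin 2 → ℝ) × (Fin 2 → Fin 3 → ℝ) := (Pi.single k 1, 0)
def Yv (m : ℝ) (ω : Fin 3 → ℝ) (k : Fin 2) : (Fin 2 → ℝ) × (Fin 2 → Fin 3 → ℝ) :=
  (0, Pi.single k (fun a => -(ω a) * (((k.1 : ℝ) + 1) * m)))

def vosc' (μ : ℝ) (α : Fin 2 → ℂ) (τ : ℝ) (k : Fin 2) : ℝ :=
  (α k * Complex.exp (Complex.I * ((((k.1 : ℝ) + 1) * μ * τ : ℝ) : ℂ))).re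

def gw (μ m : ℝ) (ω : Fin 3 → ℝ) (α : Fin 2 → ℂ) (τ : ℝ) (k : Fin 2) (a : Fin 3) : ℝ :=
  -(ω a) * (((k.1 : ℝ) + 1) * m) *
    (α k * Complex.exp (Complex.I * ((((k.1 : ℝ) + 1) * μ * τ : ℝ) : ℂ))).im

lemma decomp (μ m : ℝ) (ω : Fin 3 → ℝ) (α : Fin 2 → ℂ) (τ : ℝ) :
    ((vosc' μ α τ, gw μ m ω α τ) : (Fin 2 → ℝ) × (Fin 2 → Fin 3 → ℝ))
      = ∑ k : Fin 2,
          ((α k * Complex.exp (Complex.I * ((((k.1 : ℝ) + 1) * μ * τ : ℝ) : ℂ))).re • Xv k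
           + (α k * Complex.exp (Complex.I * ((((k.1 : ℝ) + 1) * μ * τ : ℝ) : ℂ))).im • Yv m ω k) := by
  rw [Fin.sum_univ_two]
  refine Prod.ext ?_ ?_
  · funext k; fin_cases k <;>
      simp [vosc', Xv, Yv, Pi.single_apply, Prod.smul_def]
  · funext k a; fin_cases k <;>
      simp [gw, Xv, Yv, Pi.single_apply, Prod.smul_def] <;> ring

def ac (α : Fin 2 → ℂ) (k : Fin 2) (s : Bool) : ℂ := if s then α k else (starRingEnd ℂ) (α k)

def gam (Bl : ((Fin 2 → ℝ) × (Fin 2 → Fin 3 → ℝ)) →ₗ[ℝ] ((Fin 2 → ℝ) × (Fin 2 → Fin 3 → ℝ)) →ₗ[ℝ] ℝ)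
    (m : ℝ) (ω : Fin 3 → ℝ) (k : Fin 2) (s : Bool) (l : Fin 2) (t : Bool) : ℂ :=
  (1/2)*(1/2)*((Bl (Xv k) (Xv l) : ℝ) : ℂ) + (1/2)*cI' t*((Bl (Xv k) (Yv m ω l) : ℝ) : ℂ)
  + cI' s*(1/2)*((Bl (Yv m ω k) (Xv l) : ℝ) : ℂ) + cI' s*cI' t*((Bl (Yv m ω k) (Yv m ω l) : ℝ) : ℂ)

lemma Bexp (Bl : ((Fin 2 → ℝ) × (Fin 2 → Fin 3 → ℝ)) →ₗ[ℝ] ((Fin 2 → ℝ) × (Fin 2 → Fin 3 → ℝ)) →ₗ[ℝ] ℝ)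
    (μ m : ℝ) (ω : Fin 3 → ℝ) (α : Fin 2 → ℂ) (τ : ℝ) :
    Bl (vosc' μ α τ, gw μ m ω α τ) (vosc' μ α τ, gw μ m ω α τ)
      = ∑ l : Fin 2, ∑ k : Fin 2,
          ((α k * Complex.exp (Complex.I * ((((k.1 : ℝ) + 1) * μ * τ : ℝ) : ℂ))).re
            * (α l * Complex.exp (Complex.I * ((((l.1 : ℝ) + 1) * μ * τ : ℝ) : ℂ))).re
            * Bl (Xv k) (Xv l)
          + (α k * Complex.exp (Complex.I * ((((k.1 : ℝ) + 1) * μ * τ : ℝ) : ℂ))).re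
            * (α l * Complex.exp (Complex.I * ((((l.1 : ℝ) + 1) * μ * τ : ℝ) : ℂ))).im
            * Bl (Xv k) (Yv m ω l)
          + (α k * Complex.exp (Complex.I * ((((k.1 : ℝ) + 1) * μ * τ : ℝ) : ℂ))).im
            * (α l * Complex.exp (Complex.I * ((((l.1 : ℝ) + 1) * μ * τ : ℝ) : ℂ))).re
            * Bl (Yv m ω k) (Xv l)
          + (α k * Complex.exp (Complex.I * ((((k.1 : ℝ) + 1) * μ * τ : ℝ) : ℂ))).im
            * (α l * Complex.exp (Complex.I * ((((l.1 : ℝ) + 1) * μ * τ : ℝ) : ℂ))).im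
            * Bl (Yv m ω k) (Yv m ω l)) := by
  rw [decomp]
  simp only [map_sum, map_add, map_smul, LinearMap.sum_apply, LinearMap.add_apply,
    LinearMap.smul_apply, smul_eq_mul]
  refine Finset.sum_congr rfl fun l _ => ?_
  rw [Finset.mul_sum, Finset.mul_sum, ← Finset.sum_add_distrib]
  refine Finset.sum_congr rfl fun k _ => ?_
  ring

lemma pointwise (Bl : ((Fin 2 → ℝ) × (Fin 2 → Fin 3 → ℝ)) →ₗ[ℝ] ((Fin 2 → ℝ) × (Fin 2 → Fin 3 → ℝ)) →ₗ[ℝ] ℝ)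
    (μ m : ℝ) (ω : Fin 3 → ℝ) (α : Fin 2 → ℂ) (τ : ℝ) :
    ((Bl (vosc' μ α τ, gw μ m ω α τ) (vosc' μ α τ, gw μ m ω α τ) : ℝ) : ℂ)
      = ∑ l : Fin 2, ∑ k : Fin 2, ∑ s : Bool, ∑ t : Bool,
          ac α k s * ac α l t * gam Bl m ω k s l t *
            Complex.exp (Complex.I *
              ((((sg s : ℤ) : ℝ) * (((k.1 : ℝ) + 1) * μ * τ)
                + ((sg t : ℤ) : ℝ) * (((l.1 : ℝ) + 1) * μ * τ) : ℝ) : ℂ)) := by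
  rw [Bexp Bl μ m ω α τ]
  simp only [Complex.ofReal_sum]
  refine Finset.sum_congr rfl fun l _ => ?_
  refine Finset.sum_congr rfl fun k _ => ?_
  have h := scalar_expand (Bl (Xv k) (Xv l)) (Bl (Xv k) (Yv m ω l))
    (Bl (Yv m ω k) (Xv l)) (Bl (Yv m ω k) (Yv m ω l)) (α k) (α l)
    (((k.1 : ℝ) + 1) * μ * τ) (((l.1 : ℝ) + 1) * μ * τ)
  refine Eq.trans ?_ (Eq.trans h ?_)
  · push_cast; ring
  · refine Finset.sum_congr rfl fun s _ => Finset.sum_congr rfl fun t _ => ?_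
    simp only [ac, gam]

def nres (j : ℕ) (i : Fin 2 × Fin 2 × Bool × Bool) : ℤ :=
  sg i.2.2.1 * ((i.2.1.1 : ℤ) + 1) + sg i.2.2.2 * ((i.1.1 : ℤ) + 1) - j

def coefr (Bl : ((Fin 2 → ℝ) × (Fin 2 → Fin 3 → ℝ)) →ₗ[ℝ] ((Fin 2 → ℝ) × (Fin 2 → Fin 3 → ℝ)) →ₗ[ℝ] ℝ)
    (m : ℝ) (ω : Fin 3 → ℝ) (α : Fin 2 → ℂ) (i : Fin 2 × Fin 2 × Bool × Bool) : ℂ :=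
  ac α i.2.1 i.2.2.1 * ac α i.1 i.2.2.2 * gam Bl m ω i.2.1 i.2.2.1 i.1 i.2.2.2

lemma keyInt (Bl : ((Fin 2 → ℝ) × (Fin 2 → Fin 3 → ℝ)) →ₗ[ℝ] ((Fin 2 → ℝ) × (Fin 2 → Fin 3 → ℝ)) →ₗ[ℝ] ℝ)
    (μ m : ℝ) (hμ : 0 < μ) (ω : Fin 3 → ℝ) (α : Fin 2 → ℂ) (j : ℕ) :
    ((μ / (2*π) : ℝ) : ℂ) *
      ∫ τ in (0:ℝ)..(2*π/μ),
        ((Bl (vosc' μ α τ, gw μ m ω α τ) (vosc' μ α τ, gw μ m ω α τ) : ℝ) : ℂ) *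
          Complex.exp (((-((j:ℝ) * μ * τ) : ℝ) : ℂ) * Complex.I)
    = ∑ i : Fin 2 × Fin 2 × Bool × Bool,
        (if nres j i = 0 then 1 else 0) * coefr Bl m ω α i := by
  have hInt : ∀ τ : ℝ,
      ((Bl (vosc' μ α τ, gw μ m ω α τ) (vosc' μ α τ, gw μ m ω α τ) : ℝ) : ℂ) *
          Complex.exp (((-((j:ℝ) * μ * τ) : ℝ) : ℂ) * Complex.I)
      = ∑ i : Fin 2 × Fin 2 × Bool × Bool,
          coefr Bl m ω α i *
            Complex.exp (Complex.I * ((((nres j i : ℤ) : ℝ) * μ * τ : ℝ) : ℂ)) := by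
    intro τ
    rw [pointwise Bl μ m ω α τ]
    simp only [Fintype.sum_prod_type, Finset.sum_mul]
    refine Finset.sum_congr rfl fun l _ => Finset.sum_congr rfl fun k _ =>
      Finset.sum_congr rfl fun s _ => Finset.sum_congr rfl fun t _ => ?_
    simp only [coefr, nres]
    rw [mul_assoc, ← Complex.exp_add]
    congr 1
    push_cast
    ring
  rw [intervalIntegral.integral_congr (fun τ _ => hInt τ)]
  rw [intervalIntegral.integral_finset_sum
    (fun i _ => (Continuous.intervalIntegrable (by fun_prop) _ _))]
  rw [Finset.mul_sum]
  refine Finset.sum_congr rfl fun i _ => ?_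
  rw [intervalIntegral.integral_const_mul, expInt μ hμ (nres j i)]
  by_cases h : nres j i = 0
  · simp only [h, if_true, if_pos]
    have hπ : (π : ℝ) ≠ 0 := Real.pi_ne_zero
    have hμ' : (μ : ℝ) ≠ 0 := hμ.ne'
    have hπc : ((π : ℝ) : ℂ) ≠ 0 := Complex.ofReal_ne_zero.mpr hπ
    have hμc : ((μ : ℝ) : ℂ) ≠ 0 := Complex.ofReal_ne_zero.mpr hμ'
    push_cast
    field_simp
  · simp [h]

/-- extraction of the resonant Fourier coefficients at frequencies `m₁`
and `m₂ = 2m₁`. -/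
theorem resonant_fourier_coefficients (m₁ : ℝ) (hm₁ : 0 < m₁)
    (Q : (Fin 2 → ℝ) × (Fin 2 → Fin 3 → ℝ) → ℝ) (hQ : IsQuad Q)
    (ω : Fin 3 → ℝ) (α : Fin 2 → ℂ) :
    (((m₁ / (2 * π) : ℝ) : ℂ) *
        ∫ τ in (0:ℝ)..(2 * π / m₁),
          (Q (vosc m₁ α τ, wosc m₁ ω α τ) : ℂ) *
            Complex.exp (((-(m₁ * τ) : ℝ) : ℂ) * Complex.I)
      = Phi m₁ Q 1 ω * (starRingEnd ℂ) (α 0) * α 1)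
    ∧ (((m₁ / (2 * π) : ℝ) : ℂ) *
        ∫ τ in (0:ℝ)..(2 * π / m₁),
          (Q (vosc m₁ α τ, wosc m₁ ω α τ) : ℂ) *
            Complex.exp (((-(2 * m₁ * τ) : ℝ) : ℂ) * Complex.I)
      = Phi m₁ Q 2 ω * (α 0) ^ 2) := by
  obtain ⟨Bl, hB⟩ := hQ
  have hπ : (0:ℝ) < 2*π := by positivity
  have hV : ∀ θ : ℝ, Vprof θ = vosc' (2*π) (fun _ => 1) θ := by
    intro θ; funext k
    simp only [Vprof, vosc', one_mul]
    rw [mul_comm Complex.I, Complex.exp_ofReal_mul_I_re]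
    ring_nf
  have hW : ∀ θ : ℝ, Wprof m₁ ω θ = gw (2*π) m₁ ω (fun _ => 1) θ := by
    intro θ; funext k a
    simp only [Wprof, gw, one_mul]
    rw [mul_comm Complex.I, Complex.exp_ofReal_mul_I_im]
    ring_nf
  have hvw : ∀ τ : ℝ, (vosc m₁ α τ, wosc m₁ ω α τ) = (vosc' m₁ α τ, gw m₁ m₁ ω α τ) :=
    fun τ => rfl
  have A1 := keyInt Bl m₁ m₁ hm₁ ω α 1
  have A2 := keyInt Bl m₁ m₁ hm₁ ω α 2
  have B1 := keyInt Bl (2*π) m₁ hπ ω (fun _ => 1) 1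
  have B2 := keyInt Bl (2*π) m₁ hπ ω (fun _ => 1) 2
  simp only [Nat.cast_one, one_mul, Nat.cast_ofNat] at A1 A2 B1 B2
  rw [div_self hπ.ne'] at B1 B2
  have hPhi1 : Phi m₁ Q 1 ω = ∑ i : Fin 2 × Fin 2 × Bool × Bool,
      (if nres 1 i = 0 then 1 else 0) * coefr Bl m₁ ω (fun _ => 1) i := by
    rw [← B1]
    simp only [Phi, hB, hV, hW, Complex.ofReal_one, one_mul, Nat.cast_one]
    refine intervalIntegral.integral_congr fun θ _ => ?_
    congr 2
    push_cast
    ring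
  have hPhi2 : Phi m₁ Q 2 ω = ∑ i : Fin 2 × Fin 2 × Bool × Bool,
      (if nres 2 i = 0 then 1 else 0) * coefr Bl m₁ ω (fun _ => 1) i := by
    rw [← B2]
    simp only [Phi, hB, hV, hW, Complex.ofReal_one, one_mul, Nat.cast_ofNat]
    refine intervalIntegral.integral_congr fun θ _ => ?_
    congr 2
    push_cast
    ring
  constructor
  · rw [hPhi1]
    simp only [hB, hvw]
    rw [A1]
    simp only [Fintype.sum_prod_type, Fin.sum_univ_two, Fintype.sum_bool, nres, coefr, ac, sg]
    norm_num [Fin.isValue]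
    ring
  · rw [hPhi2]
    simp only [hB, hvw]
    rw [A2]
    simp only [Fintype.sum_prod_type, Fin.sum_univ_two, Fintype.sum_bool, nres, coefr, ac, sg]
    norm_num [Fin.isValue]
    ring

end
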